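/- arXiv:2311.15611 — 2 statements merged into one kernel-verified Lean document; each statement's English description precedes it below -/
import Mathlib

section
/- Let f = a_0 + a_1 z + ... + a_m z^m ∈ ℤ[z] be primitive with a_0 = ± p^k d for a prime p, positive integers k and d with p not dividing d, and suppose every complex zero of f satisfies |z| > d. If there exists an index j with 1 ≤ j ≤ m such that p does not divide a_j, then f is a product of at most min{k, j} irreducible factors in ℤ[z]. -/
/-!
Every irreducible factor `g` of `f` is primitive, hence nonconstant, and its complex roots are
roots of `f`; so `|g(0)| = |lc g| · ∏ |roots of g| > d`. As `g(0)` divides `a₀ = ±pᵏd`, a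
factor with `p ∤ g(0)` would divide `d`, which is impossible. Hence `p` divides the constant term
of each of the `n` factors: then `pⁿ ∣ pᵏd` gives `n ≤ k`, and `Xⁿ ∣ f` modulo `p` together
with `p ∤ a_j` gives `n ≤ j`.
-/

open Polynomial Finset

theorem exists_fin_irreducible_prod_eq {α : Type*} [CommMonoidWithZero α] [WfDvdMonoid α]
    {a : α} (ha0 : a ≠ 0) (ha : ¬IsUnit a) :
    ∃ n, ∃ g : Fin n → α, (∀ i, Irreducible (g i)) ∧ a = ∏ i, g i := by
  obtain ⟨s, hirr, hprod, -⟩ := (WfDvdMonoid.not_isUnit_iff_exists_factors_eq a ha0).mp ha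
  refine ⟨s.toList.length, s.toList.get,
    fun i => hirr _ (Multiset.mem_toList.mp (List.get_mem _ i)), ?_⟩
  rw [← List.prod_ofFn, List.ofFn_get, Multiset.prod_toList, hprod]

theorem Prime.dvd_of_dvd_pow_mul_of_lt_abs {p c d : ℤ} {k : ℕ} (hp : Prime p)
    (hc : c ∣ p ^ k * d) (hd : 0 < d) (hlt : d < |c|) : p ∣ c := by
  by_contra h
  have hcd : c ∣ d := ((hp.coprime_iff_not_dvd.mpr h).pow_left.symm).dvd_of_dvd_mul_left hc
  exact (Int.le_of_dvd hd ((abs_dvd c d).mpr hcd)).not_gt hlt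

theorem Prime.le_of_pow_dvd_pow_mul {M : Type*} [CommMonoidWithZero M] [IsCancelMulZero M]
    {p d : M} {n k : ℕ}
    (hp : Prime p) (hpd : ¬p ∣ d) (h : p ^ n ∣ p ^ k * d) : n ≤ k :=
  (pow_dvd_pow_iff hp.ne_zero hp.not_isUnit).mp (hp.pow_dvd_of_dvd_mul_right n hpd h)

namespace Polynomial

theorem natDegree_pos_of_irreducible_of_isPrimitive {R : Type*} [CommSemiring R] {g : R[X]}
    (hirr : Irreducible g) (hprim : g.IsPrimitive) : 0 < g.natDegree := by
  by_contra! h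
  rw [Nat.le_zero, natDegree_eq_zero] at h
  obtain ⟨c, rfl⟩ := h
  exact hirr.not_isUnit ((hprim c dvd_rfl).map C)

theorem lt_norm_coeff_zero_of_lt_norm_roots {K : Type*} [NormedField K] [IsAlgClosed K]
    {G : K[X]} {d : ℝ} (hd : 1 ≤ d) (hdeg : 0 < G.natDegree) (hlc : 1 ≤ ‖G.leadingCoeff‖)
    (hroots : ∀ z ∈ G.roots, d < ‖z‖) : d < ‖G.coeff 0‖ := by
  have hsplit : Splits G := IsAlgClosed.splits G
  obtain ⟨r, hr⟩ : ∃ r, r ∈ G.roots := Multiset.card_pos_iff_exists_mem.mp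
    (hsplit.natDegree_eq_card_roots ▸ hdeg)
  obtain ⟨t, ht⟩ := Multiset.exists_cons_of_mem hr
  have hnorm_prod : 1 ≤ ‖t.prod‖ := by
    rw [show ‖t.prod‖ = (t.map (‖·‖)).prod from map_multiset_prod normHom t]
    refine Multiset.one_le_prod_map fun z hz => ?_
    exact hd.trans (hroots z (ht ▸ Multiset.mem_cons_of_mem hz)).le
  rw [hsplit.coeff_zero_eq_leadingCoeff_mul_prod_roots, ht, Multiset.prod_cons]
  simp only [norm_mul, norm_pow, norm_neg, norm_one, one_pow, one_mul]
  calc d < ‖r‖ := hroots r hr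
    _ ≤ ‖r‖ * ‖t.prod‖ := le_mul_of_one_le_right (norm_nonneg r) hnorm_prod
    _ ≤ ‖G.leadingCoeff‖ * (‖r‖ * ‖t.prod‖) := le_mul_of_one_le_left (by positivity) hlc

theorem lt_abs_coeff_zero_of_dvd {f g : ℤ[X]} {d : ℝ} (hd : 1 ≤ d) (hgf : g ∣ f)
    (hdeg : 0 < g.natDegree) (hroots : ∀ z : ℂ, aeval z f = 0 → d < ‖z‖) :
    d < |(g.coeff 0 : ℝ)| := by
  have hinj : Function.Injective (algebraMap ℤ ℂ) := RingHom.injective_int _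
  have hlc : (1 : ℝ) ≤ ‖(g.map (algebraMap ℤ ℂ)).leadingCoeff‖ := by
    rw [leadingCoeff_map_of_injective hinj, algebraMap_int_eq, eq_intCast, Complex.norm_intCast]
    exact_mod_cast Int.one_le_abs (leadingCoeff_ne_zero.mpr (ne_zero_of_natDegree_gt hdeg))
  have h := lt_norm_coeff_zero_of_lt_norm_roots hd
    ((natDegree_map_eq_of_injective hinj g).symm ▸ hdeg) hlc
    fun z hz => hroots z (aeval_eq_zero_of_dvd_aeval_eq_zero hgf (mem_aroots.mp hz).2)
  rwa [coeff_map, algebraMap_int_eq, eq_intCast, Complex.norm_intCast] at h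

theorem coeff_sum_range_C_mul_X_pow {R : Type*} [Semiring R] (a : ℕ → R) {i m : ℕ}
    (hi : i ≤ m) : (∑ k ∈ range (m + 1), C (a k) * X ^ k).coeff i = a i := by
  simp [finsetSum_coeff, hi]

theorem prime_dvd_coeff_zero_of_irreducible_dvd {f g : ℤ[X]} {p d : ℤ} {k : ℕ}
    (hp : Prime p) (hd : 0 < d) (hf0 : f.coeff 0 ∣ p ^ k * d) (hprim : f.IsPrimitive)
    (hroots : ∀ z : ℂ, aeval z f = 0 → (d : ℝ) < ‖z‖) (hg : Irreducible g) (hgf : g ∣ f) :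
    p ∣ g.coeff 0 := by
  have hdeg := natDegree_pos_of_irreducible_of_isPrimitive hg (isPrimitive_of_dvd hprim hgf)
  have hlt := lt_abs_coeff_zero_of_dvd (by exact_mod_cast hd) hgf hdeg hroots
  have hg0 : g.coeff 0 ∣ f.coeff 0 := _root_.map_dvd constantCoeff hgf
  exact hp.dvd_of_dvd_pow_mul_of_lt_abs (hg0.trans hf0) hd (by exact_mod_cast hlt)

theorem pow_card_dvd_coeff_zero_prod {R ι : Type*} [CommSemiring R] [Fintype ι] {p : R}
    (g : ι → R[X]) (h : ∀ i, p ∣ (g i).coeff 0) :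
    p ^ Fintype.card ι ∣ (∏ i, g i).coeff 0 := by
  rw [coeff_zero_prod, ← Finset.card_univ, ← Finset.prod_const]
  exact Finset.prod_dvd_prod_of_dvd _ _ fun i _ => h i

theorem card_le_of_not_dvd_coeff_prod {R ι : Type*} [CommRing R] [Fintype ι] {p : R} {j : ℕ}
    (g : ι → R[X]) (h : ∀ i, p ∣ (g i).coeff 0) (hj : ¬p ∣ (∏ i, g i).coeff j) :
    Fintype.card ι ≤ j := by
  by_contra! hlt
  have hmem := coeff_prod_mem_ideal_pow_tsub univ g (Ideal.span {p}) (fun _ => 1) ?_ j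
  · simp only [sum_const, card_univ, smul_eq_mul, mul_one] at hmem
    exact hj (Ideal.mem_span_singleton.mp (Ideal.pow_le_self (by omega) hmem))
  · intro i _ k
    rcases k with _ | k
    · simpa [Ideal.mem_span_singleton] using h i
    · simp

end Polynomial

theorem stmt4_general (m : ℕ) (a : ℕ → ℤ) (f : ℤ[X])
    (hf : f = ∑ i ∈ range (m + 1), C (a i) * X ^ i)
    (hprim : f.IsPrimitive)
    (p : ℕ) (hp : p.Prime) (k : ℕ) (d : ℤ) (hd : 0 < d)
    (hpd : ¬ (p : ℤ) ∣ d)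
    (ε : ℤ) (hε : ε = 1 ∨ ε = -1)
    (ha0 : a 0 = ε * (p : ℤ) ^ k * d)
    (hroots : ∀ z : ℂ, aeval z f = 0 → (d : ℝ) < ‖z‖)
    (j : ℕ) (hj1 : 1 ≤ j) (hjm : j ≤ m) (hndvd : ¬ (p : ℤ) ∣ a j) :
    ∃ n : ℕ, n ≤ min k j ∧ ∃ g : Fin n → ℤ[X],
      (∀ i, Irreducible (g i)) ∧ f = ∏ i, g i := by
  have hpz : Prime (p : ℤ) := Nat.prime_iff_prime_int.mp hp
  have hf0 : f.coeff 0 ∣ p ^ k * d := by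
    rw [hf, coeff_sum_range_C_mul_X_pow a (Nat.zero_le m), ha0]
    rcases hε with rfl | rfl <;> simp
  have hfj : ¬(p : ℤ) ∣ f.coeff j := by rwa [hf, coeff_sum_range_C_mul_X_pow a hjm]
  have hfj0 : f.coeff j ≠ 0 := fun h => hfj (h ▸ dvd_zero _)
  obtain ⟨n, g, hirr, hprod⟩ := exists_fin_irreducible_prod_eq (fun h => hfj0 (by simp [h]))
    (not_isUnit_of_natDegree_pos f (hj1.trans (le_natDegree_of_ne_zero hfj0)))
  have hpg : ∀ i, (p : ℤ) ∣ (g i).coeff 0 := fun i =>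
    prime_dvd_coeff_zero_of_irreducible_dvd hpz hd hf0 hprim hroots (hirr i)
      (hprod ▸ dvd_prod_of_mem g (mem_univ i))
  refine ⟨n, le_min ?_ ?_, g, hirr, hprod⟩
  · have hpow := pow_card_dvd_coeff_zero_prod g hpg
    rw [Fintype.card_fin, ← hprod] at hpow
    exact hpz.le_of_pow_dvd_pow_mul hpd (hpow.trans hf0)
  · simpa using card_le_of_not_dvd_coeff_prod g hpg (hprod ▸ hfj)

/-- Theorem 2: factorization into at most `min k j` irreducibles via the
prime factorization of the constant term and root location. -/
theorem stmt4 (m : ℕ) (a : ℕ → ℤ) (f : ℤ[X])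
    (hf : f = ∑ i ∈ range (m + 1), C (a i) * X ^ i)
    (ham : a m ≠ 0) (hm : 1 ≤ m)
    (hprim : f.IsPrimitive)
    (p : ℕ) (hp : p.Prime) (k : ℕ) (hk : 1 ≤ k) (d : ℤ) (hd : 0 < d)
    (hpd : ¬ (p : ℤ) ∣ d)
    (ε : ℤ) (hε : ε = 1 ∨ ε = -1)
    (ha0 : a 0 = ε * (p : ℤ) ^ k * d)
    (hroots : ∀ z : ℂ, aeval z f = 0 → (d : ℝ) < ‖z‖)
    (j : ℕ) (hj1 : 1 ≤ j) (hjm : j ≤ m) (hndvd : ¬ (p : ℤ) ∣ a j) :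
    ∃ n : ℕ, n ≤ min k j ∧ ∃ g : Fin n → ℤ[X],
      (∀ i, Irreducible (g i)) ∧ f = ∏ i, g i :=
  stmt4_general m a f hf hprim p hp k d hd hpd ε hε ha0 hroots j hj1 hjm hndvd
end

section
/- Let f = a_0 + a_1 z + ... + a_m z^m ∈ ℤ[z] be primitive with a_0 a_m ≠ 0 and m ≥ 2. Let b be a positive divisor of a_m and δ a real number with 1/b ≤ δ ≤ 1, and suppose there is an index j with 0 ≤ j ≤ m−1 such that |a_j| > Σ_{0 ≤ i < j} |a_i||a_m|^{j−i} + Σ_{j < i ≤ m} |a_i| δ^{i−j}. Then f is a product of at most m−j irreducible polynomials in ℤ[z]. -/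
/-!
On the circle `|z| = δ` the term `a_j z^j` dominates all the others, because `|a_m| δ ≥ b δ ≥ 1`;
by Rouché's theorem `f` therefore has exactly `j` roots in `|z| < δ`. The same domination holds on
every circle `1/|a_m| ≤ |z| ≤ δ`, so these `j` roots lie in `|z| < 1/|a_m|` and the remaining
`m - j` in `|z| > δ`. An irreducible factor `q` of `f` is nonconstant (`f` is primitive), has
`q(0) ≠ 0`, and its leading coefficient divides `a_m`. If all roots of `q` were small, the nonzero
integer `q(0)` would satisfy `|q(0)| = |lc q| ∏ |α| < 1`. Hence every irreducible factor takes
at least one of the `m - j` large roots.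
-/

open Polynomial Finset Metric Real

theorem circleIntegral_sub_inv_of_lt_norm {R : ℝ} (hR : 0 ≤ R) {w : ℂ} (hw : R < ‖w‖) :
    (∮ z in C(0, R), (z - w)⁻¹) = 0 := by
  refine DiffContOnCl.circleIntegral_eq_zero hR (DifferentiableOn.diffContOnCl_ball
    (U := {w}ᶜ) (fun z hz => ?_) fun z hz => ?_)
  · exact ((differentiableAt_id.sub_const w).inv (sub_ne_zero.2 hz)).differentiableWithinAt
  · rintro rfl
    exact hw.not_ge (by simpa using hz)

theorem circleIntegral_multiset_sum_sub_inv {R : ℝ} (hR : 0 < R) (s : Multiset ℂ)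
    (hs : ∀ w ∈ s, ‖w‖ ≠ R) :
    (∮ z in C(0, R), (s.map fun w => (z - w)⁻¹).sum) =
      2 * π * Complex.I * (s.filter (‖·‖ < R)).card := by
  induction s using Multiset.induction with
  | empty => simp [circleIntegral]
  | cons w s ih =>
    have hw : w ∉ sphere 0 |R| := by simpa [abs_of_pos hR] using hs w (s.mem_cons_self w)
    have hs' : ∀ v ∈ s, ‖v‖ ≠ R := fun v hv => hs v (Multiset.mem_cons_of_mem hv)
    have hint : CircleIntegrable (fun z => (s.map fun w => (z - w)⁻¹).sum) 0 R :=
      (continuousOn_multiset_sum s fun v hv => (continuousOn_id.sub continuousOn_const).inv₀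
        fun z hz h => hs' v hv (by simpa [← sub_eq_zero.1 h] using hz)).circleIntegrable hR.le
    simp only [Multiset.map_cons, Multiset.sum_cons, Multiset.filter_cons]
    rw [circleIntegral.integral_add (circleIntegrable_sub_inv_iff.2 (.inr hw)) hint, ih hs']
    rcases (hs w (s.mem_cons_self w)).lt_or_gt with hlt | hgt
    · rw [circleIntegral.integral_sub_inv_of_mem_ball (by simpa using hlt), if_pos hlt,
        Multiset.card_add, Multiset.card_singleton]
      push_cast
      ring
    · rw [circleIntegral_sub_inv_of_lt_norm hR.le hgt, if_neg hgt.not_gt]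
      simp

theorem continuous_circleIntegral {X E : Type*} [TopologicalSpace X] [NormedAddCommGroup E]
    [NormedSpace ℂ E] {F : X → ℂ → E} {c : ℂ} {R : ℝ}
    (hF : Continuous fun p : X × ℝ => F p.1 (circleMap c R p.2)) :
    Continuous fun x => ∮ z in C(c, R), F x z := by
  refine intervalIntegral.continuous_parametric_intervalIntegral_of_continuous' ?_ 0 (2 * π)
  simp only [deriv_circleMap]
  exact (((continuous_circleMap 0 R).comp continuous_snd).mul continuous_const).smul hF

namespace Polynomial

theorem circleIntegral_eval_derivative_div_eval (p : ℂ[X]) {R : ℝ} (hR : 0 < R)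
    (hp : ∀ z : ℂ, ‖z‖ = R → p.eval z ≠ 0) :
    (∮ z in C(0, R), p.derivative.eval z / p.eval z) =
      2 * π * Complex.I * (p.roots.filter (‖·‖ < R)).card := by
  have hroots : ∀ w ∈ p.roots, ‖w‖ ≠ R := fun w hw hwR =>
    hp w hwR (isRoot_of_mem_roots hw)
  rw [← circleIntegral_multiset_sum_sub_inv hR p.roots hroots]
  refine circleIntegral.integral_congr hR.le fun z hz => ?_
  rw [(IsAlgClosed.splits p).eval_derivative_div_eval_of_ne_zero (hp z (by simpa using hz))]
  simp only [one_div]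

theorem card_roots_filter_norm_lt_add (p q : ℂ[X]) {R : ℝ} (hR : 0 < R)
    (hpq : ∀ z : ℂ, ‖z‖ = R → ‖q.eval z‖ < ‖p.eval z‖) :
    ((p + q).roots.filter (‖·‖ < R)).card = (p.roots.filter (‖·‖ < R)).card := by
  -- By the argument principle the number of roots of `p + t q` in the disc depends continuously
  -- on `t ∈ [0, 1]`, hence is constant.
  set P : unitInterval → ℂ[X] := fun t => p + C (t : ℂ) * q
  have hP : ∀ t z, ‖z‖ = R → (P t).eval z ≠ 0 := by
    intro t z hz h
    have : ‖p.eval z‖ ≤ ‖q.eval z‖ := calc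
      ‖p.eval z‖ = ‖(t : ℂ) * q.eval z‖ := by
        rw [← norm_neg]; congr 1; simpa [P, neg_eq_iff_add_eq_zero] using h
      _ ≤ ‖q.eval z‖ := by
        rw [norm_mul, Complex.norm_real, Real.norm_eq_abs, abs_of_nonneg t.2.1]
        exact mul_le_of_le_one_left (norm_nonneg _) t.2.2
    exact (hpq z hz).not_ge this
  set N : unitInterval → ℕ := fun t => ((P t).roots.filter (‖·‖ < R)).card
  have hN : ∀ t, (N t : ℝ) =
      ((2 * π * Complex.I)⁻¹ * ∮ z in C(0, R), (P t).derivative.eval z / (P t).eval z).re := by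
    intro t
    rw [circleIntegral_eval_derivative_div_eval (P t) hR (hP t),
      inv_mul_cancel_left₀ (by simp [pi_ne_zero])]
    simp [N]
  have hNcont : Continuous N := by
    refine Nat.isClosedEmbedding_coe_real.isEmbedding.continuous_iff.2 ?_
    simp only [Function.comp_def, hN]
    refine Complex.continuous_re.comp (continuous_const.mul (continuous_circleIntegral ?_))
    simp only [P, derivative_add, derivative_mul, derivative_C, zero_mul, zero_add, eval_add,
      eval_mul, eval_C]
    refine Continuous.div (by fun_prop) (by fun_prop) fun x => ?_
    simpa [P] using hP x.1 _ (by simp [abs_of_pos hR])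
  have h01 : N 0 = N 1 := PreconnectedSpace.constant inferInstance hNcont
  simpa [N, P] using h01.symm

section DominantTerm

variable (A : ℕ → ℂ) {s : Finset ℕ} {j : ℕ}

theorem norm_eval_sum_erase_lt_of_dominant {z : ℂ}
    (hdom : ∑ i ∈ s.erase j, ‖A i‖ * ‖z‖ ^ i < ‖A j‖ * ‖z‖ ^ j) :
    ‖(∑ i ∈ s.erase j, C (A i) * X ^ i).eval z‖ < ‖(C (A j) * X ^ j).eval z‖ := calc
  _ ≤ ∑ i ∈ s.erase j, ‖A i‖ * ‖z‖ ^ i := by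
    simpa [eval_finsetSum] using norm_sum_le (s.erase j) fun i => A i * z ^ i
  _ < _ := by simpa using hdom

theorem eval_ne_zero_of_dominant (hj : j ∈ s) {z : ℂ}
    (hdom : ∑ i ∈ s.erase j, ‖A i‖ * ‖z‖ ^ i < ‖A j‖ * ‖z‖ ^ j) :
    (∑ i ∈ s, C (A i) * X ^ i).eval z ≠ 0 := by
  intro h
  have hlt := norm_eval_sum_erase_lt_of_dominant A hdom
  rw [← add_sum_erase s _ hj, eval_add, add_eq_zero_iff_eq_neg'] at h
  rw [h, norm_neg] at hlt
  exact hlt.false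

theorem card_roots_filter_norm_lt_of_dominant (hj : j ∈ s) {R : ℝ} (hR : 0 < R)
    (hdom : ∑ i ∈ s.erase j, ‖A i‖ * R ^ i < ‖A j‖ * R ^ j) :
    ((∑ i ∈ s, C (A i) * X ^ i).roots.filter (‖·‖ < R)).card = j := by
  have hAj : A j ≠ 0 := by
    rintro hA
    rw [hA, norm_zero, zero_mul] at hdom
    exact hdom.not_ge (by positivity)
  rw [← add_sum_erase s _ hj, card_roots_filter_norm_lt_add _ _ hR fun z hz =>
    norm_eval_sum_erase_lt_of_dominant A (hz ▸ hdom), roots_C_mul_X_pow hAj]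
  rw [Multiset.nsmul_singleton, Multiset.filter_eq_self.2 fun z hz => by
    simp [Multiset.eq_of_mem_replicate hz, hR]]
  simp

end DominantTerm

theorem card_roots_filter_lt_norm_le (p : ℂ[X]) (δ : ℝ) :
    (p.roots.filter (δ < ‖·‖)).card ≤ p.natDegree - (p.roots.filter (‖·‖ < δ)).card := by
  have hsplit := congrArg Multiset.card (Multiset.filter_add_not (‖·‖ < δ) p.roots)
  have hle := Multiset.card_le_card <| Multiset.monotone_filter_right p.roots
    fun (α : ℂ) (h : δ < ‖α‖) => h.not_gt
  rw [Multiset.card_add, ← (IsAlgClosed.splits p).natDegree_eq_card_roots] at hsplit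
  omega

theorem natDegree_sum_range_C_mul_X_pow {R : Type*} [Semiring R] (a : ℕ → R) {m : ℕ}
    (ham : a m ≠ 0) : (∑ i ∈ range (m + 1), C (a i) * X ^ i).natDegree = m := by
  refine natDegree_eq_of_le_of_coeff_ne_zero ?_ (by simpa)
  rw [natDegree_le_iff_coeff_eq_zero]
  intro k hk
  simp only [finsetSum_coeff, coeff_C_mul, coeff_X_pow, mul_ite, mul_one, mul_zero, sum_ite_eq,
    mem_range, Order.lt_add_one_iff, ite_eq_right_iff]
  omega

theorem IsPrimitive.natDegree_pos_of_irreducible_dvd {R : Type*} [CommRing R]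
    {f q : R[X]} (hf : f.IsPrimitive) (hq : Irreducible q) (hqf : q ∣ f) : 0 < q.natDegree := by
  refine Nat.pos_of_ne_zero fun h => hq.not_isUnit ?_
  obtain ⟨c, rfl⟩ := natDegree_eq_zero.1 h
  exact isUnit_C.2 (hf c hqf)

theorem exists_mem_roots_map_one_le_mul_norm (q : ℤ[X]) (hq0 : q.eval 0 ≠ 0)
    (hdeg : 0 < q.natDegree) {L : ℝ} (hL : |(q.leadingCoeff : ℝ)| ≤ L) :
    ∃ α ∈ (q.map (Int.castRingHom ℂ)).roots, 1 ≤ L * ‖α‖ := by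
  set Q := q.map (Int.castRingHom ℂ)
  by_contra! hsmall
  have hinj : Function.Injective (Int.castRingHom ℂ) := Int.cast_injective
  have hQ0 : Q.eval 0 = q.eval 0 := by simp [Q, eval_map, coeff_zero_eq_eval_zero]
  have hroots0 : ∀ α ∈ Q.roots, α ≠ 0 := by
    rintro α hα rfl
    have := isRoot_of_mem_roots hα
    rw [IsRoot, hQ0] at this
    exact hq0 (by exact_mod_cast this)
  have hcard : Q.roots.card = q.natDegree := by
    rw [← (IsAlgClosed.splits Q).natDegree_eq_card_roots, natDegree_map_eq_of_injective hinj]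
  have hlc : (1 : ℝ) ≤ |(q.leadingCoeff : ℝ)| := by
    exact_mod_cast Int.one_le_abs (leadingCoeff_ne_zero.2 (ne_zero_of_natDegree_gt hdeg))
  have hL1 : 1 ≤ L := hlc.trans hL
  have hnorm : ‖Q.eval 0‖ = |(q.leadingCoeff : ℝ)| * (Q.roots.map (‖·‖)).prod := by
    rw [(IsAlgClosed.splits Q).eval_eq_prod_roots, leadingCoeff_map_of_injective hinj, norm_mul,
      eq_intCast, Complex.norm_intCast]
    congr 1
    simpa using map_multiset_prod (normHom : ℂ →*₀ ℝ) Q.roots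
  have : (1 : ℝ) < 1 := calc
    (1 : ℝ) ≤ ‖Q.eval 0‖ := by rw [hQ0]; exact_mod_cast Int.one_le_abs hq0
    _ ≤ L ^ Q.roots.card * (Q.roots.map (‖·‖)).prod := by
      rw [hnorm]
      gcongr
      · exact Multiset.prod_map_nonneg fun _ _ => norm_nonneg _
      · exact hL.trans (le_self_pow₀ hL1 (hcard ▸ hdeg.ne'))
    _ = (Q.roots.map fun α => L * ‖α‖).prod := by simp [Multiset.prod_map_mul]
    _ < (Q.roots.map fun _ => (1 : ℝ)).prod :=
      Multiset.prod_map_lt_prod_map (Multiset.card_pos.1 (hcard ▸ hdeg)) _ _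
        (fun α hα => by have := norm_pos_iff.2 (hroots0 α hα); positivity) hsmall
    _ = 1 := by simp
  exact this.false

theorem card_le_card_filter_roots_prod {R : Type*} [CommRing R] [IsDomain R] (P : R → Prop)
    [DecidablePred P] (s : Multiset R[X]) (hs0 : (0 : R[X]) ∉ s)
    (hs : ∀ q ∈ s, ∃ α ∈ q.roots, P α) :
    Multiset.card s ≤ (s.prod.roots.filter P).card := by
  rw [roots_multiset_prod s hs0, Multiset.filter_bind, Multiset.card_bind]
  have := Multiset.card_nsmul_le_sum (a := 1) fun n hn => by
    obtain ⟨q, hq, rfl⟩ := Multiset.mem_map.1 hn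
    obtain ⟨α, hα, hPα⟩ := hs q hq
    exact Multiset.card_pos_iff_exists_mem.2 ⟨α, Multiset.mem_filter.2 ⟨hα, hPα⟩⟩
  rwa [Multiset.card_map, smul_eq_mul, mul_one] at this

theorem exists_irreducible_factors_card_le (f : ℤ[X]) (hprim : f.IsPrimitive)
    (hdeg : 0 < f.natDegree) (hf0 : f.eval 0 ≠ 0) {δ : ℝ}
    (hgap : ∀ α ∈ (f.map (Int.castRingHom ℂ)).roots,
      1 ≤ |(f.leadingCoeff : ℝ)| * ‖α‖ → δ < ‖α‖) :
    ∃ s : Multiset ℤ[X], (∀ q ∈ s, Irreducible q) ∧ s.prod = f ∧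
      Multiset.card s ≤ ((f.map (Int.castRingHom ℂ)).roots.filter (δ < ‖·‖)).card := by
  obtain ⟨s, hirr, hprod, -⟩ := (WfDvdMonoid.not_isUnit_iff_exists_factors_eq f
    hprim.ne_zero).1 (not_isUnit_of_natDegree_pos f hdeg)
  refine ⟨s, hirr, hprod, ?_⟩
  have hlarge : ∀ q ∈ s, ∃ α ∈ (q.map (Int.castRingHom ℂ)).roots, δ < ‖α‖ := by
    intro q hq
    have hqf : q ∣ f := hprod ▸ Multiset.dvd_prod hq
    have hlc : |(q.leadingCoeff : ℝ)| ≤ |(f.leadingCoeff : ℝ)| := by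
      exact_mod_cast Int.le_of_dvd (abs_pos.2 (leadingCoeff_ne_zero.2 hprim.ne_zero))
        ((abs_dvd_abs _ _).2 (leadingCoeff_dvd_leadingCoeff hqf))
    have hq0 : q.eval 0 ≠ 0 := fun h => hf0 <| by
      simpa [h] using eval_dvd (x := 0) hqf
    obtain ⟨α, hα, hαL⟩ := exists_mem_roots_map_one_le_mul_norm q hq0
      (hprim.natDegree_pos_of_irreducible_dvd (hirr q hq) hqf) hlc
    have hroots := roots.le_of_dvd ((Polynomial.map_ne_zero_iff Int.cast_injective).2
      hprim.ne_zero) (Polynomial.map_dvd (Int.castRingHom ℂ) hqf)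
    exact ⟨α, hα, hgap α (Multiset.mem_of_le hroots hα) hαL⟩
  calc Multiset.card s = Multiset.card (s.map (map (Int.castRingHom ℂ))) := (s.card_map _).symm
    _ ≤ _ := by
      rw [← hprod, Polynomial.map_multiset_prod]
      refine card_le_card_filter_roots_prod _ _ (fun h => ?_) (by simpa using hlarge)
      obtain ⟨q, hq, hq0⟩ := Multiset.mem_map.1 h
      exact (hirr q hq).ne_zero ((Polynomial.map_eq_zero_iff Int.cast_injective).1 hq0)

end Polynomial

theorem sum_erase_mul_pow_lt {c : ℕ → ℝ} (hc : ∀ i, 0 ≤ c i) {M δ r : ℝ} {m j : ℕ}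
    (hjm : j ≤ m) (hr : 0 ≤ r) (hMr : 1 ≤ M * r) (hrδ : r ≤ δ)
    (h : ∑ i ∈ range j, c i * M ^ (j - i) + ∑ i ∈ Icc (j + 1) m, c i * δ ^ (i - j) < c j) :
    ∑ i ∈ (range (m + 1)).erase j, c i * r ^ i < c j * r ^ j := by
  have hr' : 0 < r := hr.lt_of_ne (by rintro rfl; norm_num at hMr)
  have hsplit : (range (m + 1)).erase j = range j ∪ Icc (j + 1) m := by
    ext i; simp only [mem_erase, mem_range, mem_union, mem_Icc]; omega
  have hdisj : Disjoint (range j) (Icc (j + 1) m) := by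
    rw [disjoint_left]; intro i; simp only [mem_range, mem_Icc]; omega
  have hlow : ∀ i ∈ range j, c i * r ^ i ≤ c i * M ^ (j - i) * r ^ j := by
    intro i hi
    have hij : i + (j - i) = j := Nat.add_sub_cancel' (mem_range.1 hi).le
    calc c i * r ^ i ≤ c i * r ^ i * (M * r) ^ (j - i) :=
          le_mul_of_one_le_right (mul_nonneg (hc i) (pow_nonneg hr i)) (one_le_pow₀ hMr)
      _ = c i * M ^ (j - i) * (r ^ i * r ^ (j - i)) := by ring
      _ = c i * M ^ (j - i) * r ^ j := by rw [← pow_add, hij]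
  have hhigh : ∀ i ∈ Icc (j + 1) m, c i * r ^ i ≤ c i * δ ^ (i - j) * r ^ j := by
    intro i hi
    have hij : (i - j) + j = i := Nat.sub_add_cancel (by have := (mem_Icc.1 hi).1; omega)
    calc c i * r ^ i = c i * r ^ (i - j) * r ^ j := by rw [mul_assoc, ← pow_add, hij]
      _ ≤ c i * δ ^ (i - j) * r ^ j := by have := hc i; gcongr
  calc ∑ i ∈ (range (m + 1)).erase j, c i * r ^ i
      ≤ (∑ i ∈ range j, c i * M ^ (j - i) + ∑ i ∈ Icc (j + 1) m, c i * δ ^ (i - j)) * r ^ j := by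
        rw [hsplit, sum_union hdisj, add_mul, sum_mul, sum_mul]
        exact add_le_add (sum_le_sum hlow) (sum_le_sum hhigh)
    _ < c j * r ^ j := by gcongr

theorem exists_irreducible_factors_card_le_of_dominant (m : ℕ) (a : ℕ → ℤ) (f : ℤ[X])
    (hf : f = ∑ i ∈ range (m + 1), C (a i) * X ^ i) (ha0 : a 0 ≠ 0) (ham : a m ≠ 0)
    (hprim : f.IsPrimitive) {δ : ℝ} (hamδ : 1 ≤ |(a m : ℝ)| * δ) {j : ℕ} (hjm : j < m)
    (hineq : ∑ i ∈ range j, |(a i : ℝ)| * |(a m : ℝ)| ^ (j - i) +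
      ∑ i ∈ Icc (j + 1) m, |(a i : ℝ)| * δ ^ (i - j) < |(a j : ℝ)|) :
    ∃ s : Multiset ℤ[X], (∀ q ∈ s, Irreducible q) ∧ s.prod = f ∧ Multiset.card s ≤ m - j := by
  have hj : j ∈ range (m + 1) := by rw [mem_range]; omega
  have hδ : 0 < δ := pos_of_mul_pos_right (one_pos.trans_le hamδ) (abs_nonneg _)
  have hdom : ∀ r, 0 ≤ r → 1 ≤ |(a m : ℝ)| * r → r ≤ δ →
      ∑ i ∈ (range (m + 1)).erase j, ‖(a i : ℂ)‖ * r ^ i < ‖(a j : ℂ)‖ * r ^ j :=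
    fun r hr h1 h2 => by
      simpa only [Complex.norm_intCast] using
        sum_erase_mul_pow_lt (fun i => abs_nonneg (a i : ℝ)) hjm.le hr h1 h2 hineq
  have hF : f.map (Int.castRingHom ℂ) = ∑ i ∈ range (m + 1), C (a i : ℂ) * X ^ i := by
    simp [hf, Polynomial.map_sum]
  have hdeg : f.natDegree = m := hf ▸ natDegree_sum_range_C_mul_X_pow a ham
  have hlc : f.leadingCoeff = a m := by rw [leadingCoeff, hdeg, hf]; simp
  have hsmall : ((f.map (Int.castRingHom ℂ)).roots.filter (‖·‖ < δ)).card = j :=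
    hF ▸ card_roots_filter_norm_lt_of_dominant _ hj hδ (hdom δ hδ.le hamδ le_rfl)
  have hlarge := card_roots_filter_lt_norm_le (f.map (Int.castRingHom ℂ)) δ
  rw [natDegree_map_eq_of_injective Int.cast_injective, hdeg, hsmall] at hlarge
  obtain ⟨s, hirr, hprod, hs⟩ := exists_irreducible_factors_card_le f hprim (by omega)
    (by simpa [hf, ← coeff_zero_eq_eval_zero] using ha0)
    fun α hα h1 => by
      by_contra! h2
      rw [hlc] at h1
      exact eval_ne_zero_of_dominant _ hj (hdom ‖α‖ (norm_nonneg α) h1 h2)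
        (hF ▸ isRoot_of_mem_roots hα)
  exact ⟨s, hirr, hprod, hs.trans hlarge⟩

theorem stmt8_general (m : ℕ) (hm : 2 ≤ m) (a : ℕ → ℤ) (f : ℤ[X])
    (hf : f = ∑ i ∈ range (m + 1), C (a i) * X ^ i)
    (ha : a 0 * a m ≠ 0) (hprim : f.IsPrimitive)
    (b : ℤ) (hb : 0 < b) (hbdvd : b ∣ a m)
    (δ : ℝ) (hδ1 : 1 / (b : ℝ) ≤ δ)
    (j : ℕ) (hj : j ≤ m - 1)
    (hineq : (|a j| : ℝ) >
      (∑ i ∈ range j, (|a i| : ℝ) * (|a m| : ℝ) ^ (j - i)) +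
      ∑ i ∈ Icc (j + 1) m, (|a i| : ℝ) * δ ^ (i - j)) :
    ∃ n : ℕ, n ≤ m - j ∧ ∃ g : Fin n → ℤ[X],
      (∀ i, Irreducible (g i)) ∧ f = ∏ i, g i := by
  obtain ⟨ha0, ham⟩ := mul_ne_zero_iff.1 ha
  have hbδ : 1 ≤ (b : ℝ) * δ := by rwa [div_le_iff₀ (by positivity), mul_comm] at hδ1
  have hbam : (b : ℝ) ≤ |(a m : ℝ)| := by
    exact_mod_cast Int.le_of_dvd (abs_pos.2 ham) ((dvd_abs _ _).2 hbdvd)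
  have hamδ : 1 ≤ |(a m : ℝ)| * δ := hbδ.trans <| mul_le_mul_of_nonneg_right hbam
    (pos_of_mul_pos_right (one_pos.trans_le hbδ) (by positivity)).le
  obtain ⟨s, hirr, hprod, hs⟩ := exists_irreducible_factors_card_le_of_dominant m a f hf ha0 ham
    hprim hamδ (by omega) hineq
  refine ⟨s.toList.length, by simpa using hs, fun i => s.toList[i],
    fun i => hirr _ (s.mem_toList.1 (List.getElem_mem _)), ?_⟩
  rw [← hprod, ← Multiset.prod_toList]
  exact (Fin.prod_univ_getElem _).symm

/-- Theorem 4: a generalization of Perron's criterion. -/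
theorem stmt8 (m : ℕ) (hm : 2 ≤ m) (a : ℕ → ℤ) (f : ℤ[X])
    (hf : f = ∑ i ∈ range (m + 1), C (a i) * X ^ i)
    (ha : a 0 * a m ≠ 0) (hprim : f.IsPrimitive)
    (b : ℤ) (hb : 0 < b) (hbdvd : b ∣ a m)
    (δ : ℝ) (hδ1 : 1 / (b : ℝ) ≤ δ) (hδ2 : δ ≤ 1)
    (j : ℕ) (hj : j ≤ m - 1)
    (hineq : (|a j| : ℝ) >
      (∑ i ∈ range j, (|a i| : ℝ) * (|a m| : ℝ) ^ (j - i)) +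
      ∑ i ∈ Icc (j + 1) m, (|a i| : ℝ) * δ ^ (i - j)) :
    ∃ n : ℕ, n ≤ m - j ∧ ∃ g : Fin n → ℤ[X],
      (∀ i, Irreducible (g i)) ∧ f = ∏ i, g i :=
  stmt8_general m hm a f hf ha hprim b hb hbdvd δ hδ1 j hj hineq
end
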